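/- arXiv:1011.3168 — 8 statements merged into one kernel-verified Lean document; each statement's English description precedes it below -/
import Mathlib

section
/- For any finite set V of real-valued trees of depth T (each tree v is a sequence of maps v_t : {±1}^{t-1} → ℝ), if ε_1,...,ε_T are i.i.d. Rademacher random variables then E[max over v in V of Σ_{t=1}^T ε_t v_t(ε)] ≤ sqrt(2 log|V| · max over v in V and ε in {±1}^T of Σ_{t=1}^T v_t(ε)^2). -/
/-!
Massart's finite-class lemma along a tree. For a single predictable tree `v` and `λ > 0`,
`exp (λ ∑ ε_t v_t(ε) - λ²/2 ∑ v_t(ε)²)` is a supermartingale in `t`: flipping the sign `ε_t`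
leaves `v_t` and the past unchanged, and `exp (x - x²/2) + exp (-x - x²/2) ≤ 2` because
`cosh x ≤ exp (x²/2)`. Hence the average of `exp (λ ∑ ε_t v_t(ε))` is at most `exp (λ² B / 2)`.
Bounding the exponential of the maximum by the sum over `V`, Jensen gives
`E max ≤ log |V| / λ + λ B / 2`, and optimising over `λ` gives the square root.
-/

open Finset Real

lemma exp_sub_sq_half_add_exp_neg_sub_sq_half_le (x : ℝ) :
    exp (x - x ^ 2 / 2) + exp (-x - x ^ 2 / 2) ≤ 2 := by
  have hcosh := cosh_le_exp_half_sq x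
  rw [cosh_eq] at hcosh
  have hfactor : exp (x - x ^ 2 / 2) + exp (-x - x ^ 2 / 2)
      = (exp x + exp (-x)) * exp (-(x ^ 2 / 2)) := by
    rw [add_mul, ← exp_add, ← exp_add]; ring_nf
  calc _ ≤ 2 * exp (x ^ 2 / 2) * exp (-(x ^ 2 / 2)) := by rw [hfactor]; gcongr; linarith
    _ = 2 := by rw [mul_assoc, ← exp_add, add_neg_cancel, exp_zero, mul_one]

lemma exp_sum_div_card_le {Ω : Type*} [Fintype Ω] [Nonempty Ω] (f : Ω → ℝ) :
    exp ((∑ ω, f ω) / Fintype.card Ω) ≤ (∑ ω, exp (f ω)) / Fintype.card Ω := by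
  have hn : (0 : ℝ) < Fintype.card Ω := by exact_mod_cast Fintype.card_pos
  have hjensen := convexOn_exp.map_sum_le (t := univ) (w := fun _ => (Fintype.card Ω : ℝ)⁻¹)
    (p := f) (fun _ _ => by positivity) (by simp [card_univ, hn.ne']) (fun _ _ => Set.mem_univ _)
  simpa only [smul_eq_mul, ← mul_sum, div_eq_inv_mul] using hjensen

lemma le_sqrt_of_forall_pos_mul_le {a L B : ℝ} (hB : 0 ≤ B)
    (h : ∀ l > 0, l * a ≤ L + l ^ 2 * B / 2) : a ≤ √(2 * L * B) := by
  rcases le_or_gt a 0 with ha | ha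
  · exact ha.trans (sqrt_nonneg _)
  rcases hB.eq_or_lt with rfl | hB
  · have := h ((|L| + 1) / a) (by positivity)
    rw [div_mul_cancel₀ _ ha.ne'] at this
    linarith [le_abs_self L]
  · have := h (a / B) (by positivity)
    apply le_sqrt_of_sq_le
    field_simp at this
    nlinarith

lemma Finset.sum_le_sum_of_add_comp_le {α : Type*} [Fintype α] (e : Equiv.Perm α)
    {f g : α → ℝ} (h : ∀ a, f a + f (e a) ≤ g a + g (e a)) : ∑ a, f a ≤ ∑ a, g a := by
  have hsum := sum_le_sum fun a (_ : a ∈ univ) => h a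
  rw [sum_add_distrib, sum_add_distrib, Equiv.sum_comp e f, Equiv.sum_comp e g] at hsum
  linarith

/-- Massart's lemma for finitely many random variables on a finite uniform probability space
that are sub-Gaussian with variance proxy `B`. -/
lemma sum_sup'_div_card_le_sqrt {Ω α : Type*} [Fintype Ω] [Nonempty Ω] (V : Finset α)
    (hV : V.Nonempty) (X : α → Ω → ℝ) {B : ℝ} (hB : 0 ≤ B)
    (hmgf : ∀ v ∈ V, ∀ l > 0, ∑ ω, exp (l * X v ω) ≤ Fintype.card Ω * exp (l ^ 2 * B / 2)) :
    (∑ ω, V.sup' hV (X · ω)) / Fintype.card Ω ≤ √(2 * log V.card * B) := by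
  have hn : (0 : ℝ) < Fintype.card Ω := by exact_mod_cast Fintype.card_pos
  have hV' : (0 : ℝ) < V.card := by exact_mod_cast hV.card_pos
  refine le_sqrt_of_forall_pos_mul_le hB fun l hl => ?_
  have hmax : ∀ ω, exp (l * V.sup' hV (X · ω)) ≤ ∑ v ∈ V, exp (l * X v ω) := fun ω => by
    obtain ⟨v, hv, hsup⟩ := exists_mem_eq_sup' hV (X · ω)
    rw [hsup]
    exact single_le_sum (f := fun v => exp (l * X v ω)) (fun _ _ => (exp_pos _).le) hv
  have hexp : exp (l * ((∑ ω, V.sup' hV (X · ω)) / Fintype.card Ω))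
      ≤ V.card * exp (l ^ 2 * B / 2) :=
    calc exp (l * ((∑ ω, V.sup' hV (X · ω)) / Fintype.card Ω))
        ≤ (∑ ω, exp (l * V.sup' hV (X · ω))) / Fintype.card Ω := by
          rw [mul_div_assoc', mul_sum]; exact exp_sum_div_card_le _
      _ ≤ (∑ v ∈ V, ∑ ω, exp (l * X v ω)) / Fintype.card Ω := by
          rw [sum_comm]; gcongr with ω; exact hmax ω
      _ ≤ (∑ _v ∈ V, Fintype.card Ω * exp (l ^ 2 * B / 2)) / Fintype.card Ω := by
          gcongr with v hv; exact hmgf v hv l hl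
      _ = V.card * exp (l ^ 2 * B / 2) := by
          rw [sum_const, nsmul_eq_mul]; field_simp
  have := log_le_log (exp_pos _) hexp
  rwa [log_exp, log_mul hV'.ne' (exp_pos _).ne', log_exp] at this

def boolSign (b : Bool) : ℝ := if b then 1 else -1

@[simp] lemma boolSign_not (b : Bool) : boolSign (!b) = -boolSign b := by
  cases b <;> simp [boolSign]

@[simp] lemma boolSign_sq (b : Bool) : boolSign b ^ 2 = 1 := by
  cases b <;> simp [boolSign]

section Tree

variable {ι : Type*} [LinearOrder ι]

/-- The real-valued trees of depth `card ι`: `v t ε` depends only on the signs `ε s`, `s < t`. -/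
def IsPredictable (v : ι → (ι → Bool) → ℝ) : Prop :=
  ∀ t ε ε', (∀ s, s < t → ε s = ε' s) → v t ε = v t ε'

def flipAt (i : ι) : Equiv.Perm (ι → Bool) :=
  Function.Involutive.toPerm (fun ε => Function.update ε i (!ε i)) fun ε => by
    simp [Function.update_idem]

lemma flipAt_apply_self (i : ι) (ε : ι → Bool) : flipAt i ε i = !ε i :=
  Function.update_self i _ ε

lemma flipAt_apply_of_ne {i j : ι} (hj : j ≠ i) (ε : ι → Bool) : flipAt i ε j = ε j :=
  Function.update_of_ne hj _ ε

lemma IsPredictable.apply_flipAt {v : ι → (ι → Bool) → ℝ} (hv : IsPredictable v) {t i : ι}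
    (hti : t ≤ i) (ε : ι → Bool) : v t (flipAt i ε) = v t ε :=
  hv t _ _ fun _ hs => flipAt_apply_of_ne (hs.trans_le hti).ne ε

noncomputable def expPotential (l : ℝ) (v : ι → (ι → Bool) → ℝ) (s : Finset ι)
    (ε : ι → Bool) : ℝ :=
  exp (∑ t ∈ s, (l * boolSign (ε t) * v t ε - l ^ 2 * v t ε ^ 2 / 2))

lemma expPotential_flipAt {v : ι → (ι → Bool) → ℝ} (hv : IsPredictable v) (l : ℝ)
    {s : Finset ι} {i : ι} (hs : ∀ t ∈ s, t < i) (ε : ι → Bool) :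
    expPotential l v s (flipAt i ε) = expPotential l v s ε := by
  unfold expPotential
  congr 1
  refine sum_congr rfl fun t ht => ?_
  rw [hv.apply_flipAt (hs t ht).le, flipAt_apply_of_ne (hs t ht).ne]

variable [Fintype ι]

lemma sum_expPotential_insert_le {v : ι → (ι → Bool) → ℝ} (hv : IsPredictable v) (l : ℝ)
    {s : Finset ι} {i : ι} (hs : ∀ t ∈ s, t < i) :
    ∑ ε, expPotential l v (insert i s) ε ≤ ∑ ε, expPotential l v s ε := by
  have hi : i ∉ s := fun h => lt_irrefl i (hs i h)
  refine sum_le_sum_of_add_comp_le (flipAt i) fun ε => ?_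
  have hinsert : ∀ ε', expPotential l v (insert i s) ε' = expPotential l v s ε' *
      exp (l * boolSign (ε' i) * v i ε' - (l * boolSign (ε' i) * v i ε') ^ 2 / 2) := fun ε' => by
    rw [expPotential, sum_insert hi, add_comm, exp_add, expPotential, mul_pow, mul_pow,
      boolSign_sq, mul_one]
  have hflip : l * boolSign (flipAt i ε i) * v i (flipAt i ε) = -(l * boolSign (ε i) * v i ε) := by
    rw [flipAt_apply_self, boolSign_not, hv.apply_flipAt le_rfl]; ring
  rw [hinsert, hinsert, hflip, expPotential_flipAt hv l hs, neg_sq, ← mul_add, ← mul_two]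
  exact mul_le_mul_of_nonneg_left (exp_sub_sq_half_add_exp_neg_sub_sq_half_le _) (exp_pos _).le

lemma sum_expPotential_le {v : ι → (ι → Bool) → ℝ} (hv : IsPredictable v) (l : ℝ)
    (s : Finset ι) : ∑ ε, expPotential l v s ε ≤ 2 ^ Fintype.card ι := by
  induction s using Finset.induction_on_max with
  | empty => simp [expPotential]
  | insert i s hs ih => exact (sum_expPotential_insert_le hv l hs).trans ih

lemma sum_exp_mul_sum_le {v : ι → (ι → Bool) → ℝ} (hv : IsPredictable v) (l : ℝ) {B : ℝ}
    (hB : ∀ ε, ∑ t, v t ε ^ 2 ≤ B) :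
    ∑ ε, exp (l * ∑ t, boolSign (ε t) * v t ε) ≤ 2 ^ Fintype.card ι * exp (l ^ 2 * B / 2) := by
  have hsplit : ∀ ε, exp (l * ∑ t, boolSign (ε t) * v t ε)
      = expPotential l v univ ε * exp (l ^ 2 * (∑ t, v t ε ^ 2) / 2) := fun ε => by
    rw [expPotential, ← exp_add, sum_sub_distrib, ← sum_div]
    simp only [mul_assoc, ← mul_sum, sub_add_cancel]
  calc ∑ ε, exp (l * ∑ t, boolSign (ε t) * v t ε)
      ≤ ∑ ε, expPotential l v univ ε * exp (l ^ 2 * B / 2) := by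
        gcongr with ε
        rw [hsplit]
        gcongr
        · exact (exp_pos _).le
        · exact hB ε
    _ ≤ 2 ^ Fintype.card ι * exp (l ^ 2 * B / 2) := by
        rw [← sum_mul]; gcongr; exact sum_expPotential_le hv l univ

end Tree

/-- Maximal inequality for a finite set of real-valued trees of depth `T`
(Lemma 4 of Rakhlin–Sridharan–Tewari): the expectation (uniform average over
sign sequences `ε ∈ {±1}^T`) of the maximum over `v ∈ V` of `∑ t, ε t * v t ε`
is at most `√(2 log |V| · max_{v,ε} ∑ t, v t ε ^ 2)`. -/
theorem stmt_0 (T : ℕ) (V : Finset (Fin T → (Fin T → Bool) → ℝ)) (hV : V.Nonempty)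
    (htree : ∀ v ∈ V, ∀ t : Fin T, ∀ ε ε' : Fin T → Bool,
      (∀ s : Fin T, s < t → ε s = ε' s) → v t ε = v t ε') :
    (∑ ε : Fin T → Bool, V.sup' hV fun v => ∑ t, (if ε t then (1:ℝ) else -1) * v t ε) / 2 ^ T
      ≤ Real.sqrt (2 * Real.log V.card *
          V.sup' hV fun v => (Finset.univ : Finset (Fin T → Bool)).sup'
            Finset.univ_nonempty fun ε => ∑ t, (v t ε) ^ 2) := by
  set B := V.sup' hV fun v => (univ : Finset (Fin T → Bool)).sup' univ_nonempty
    fun ε => ∑ t, v t ε ^ 2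
  have hB : ∀ v ∈ V, ∀ ε, ∑ t, v t ε ^ 2 ≤ B := fun v hv ε =>
    le_sup'_of_le _ hv (le_sup' (fun ε => ∑ t, v t ε ^ 2) (mem_univ ε))
  obtain ⟨v₀, hv₀⟩ := hV
  have hB_nonneg : 0 ≤ B := (sum_nonneg fun t _ => sq_nonneg (v₀ t default)).trans (hB v₀ hv₀ _)
  have hcard : (Fintype.card (Fin T → Bool) : ℝ) = 2 ^ T := by simp
  rw [← hcard]
  refine sum_sup'_div_card_le_sqrt V _ _ hB_nonneg fun v hv l _ => ?_
  rw [hcard]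
  simpa [boolSign] using sum_exp_mul_sum_le (htree v hv) l (hB v hv)
end

section
/- Let F be the probability simplex in ℝ^k and let ‖·‖ be any norm on ℝ^k. Then the function x ↦ inf_{f ∈ F} ‖f ⊙ x‖, defined on the nonnegative orthant (where f ⊙ x denotes coordinatewise product), is concave. -/
/-!
Write `g x = ⨅ f ∈ Δ, N (f ⊙ x)`, which is positively homogeneous, so concavity amounts to
superadditivity `g u + g v ≤ g (u + v)`. Fix `f ∈ Δ` and put `z = u + v`. If `u > 0`, the
weights proportional to `f ⊙ z / u` lie in `Δ` and turn `f ⊙ z` into a multiple of an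
admissible vector, which gives `g u ≤ N (f ⊙ z) / ∑ fᵢ zᵢ / uᵢ`; by the harmonic-arithmetic
mean inequality this is at most `N (f ⊙ z) ∑ fᵢ uᵢ / zᵢ` (trivially so when `u` has a zero
coordinate, as then `g u = 0`). Adding the same bound for `v` and using
`∑ fᵢ (uᵢ + vᵢ) / zᵢ ≤ 1` gives `g u + g v ≤ N (f ⊙ z)`.
-/

open Finset

variable {ι : Type*} [Fintype ι]

lemma inv_sum_mul_le_sum_mul_inv {f : ι → ℝ} (hf : f ∈ stdSimplex ℝ ι)
    {a : ι → ℝ} (ha : ∀ i, 0 < a i) : (∑ i, f i * a i)⁻¹ ≤ ∑ i, f i * (a i)⁻¹ := by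
  simpa [zpow_neg_one] using
    (convexOn_zpow (𝕜 := ℝ) (-1)).map_sum_le (fun i _ => hf.1 i) hf.2 fun i _ => ha i

noncomputable def simplexInf (N : (ι → ℝ) → ℝ) (x : ι → ℝ) : ℝ :=
  ⨅ f : stdSimplex ℝ ι, N (fun i => (f : ι → ℝ) i * x i)

variable {N : (ι → ℝ) → ℝ}

lemma simplexInf_le (hN0 : ∀ x, 0 ≤ N x) (x : ι → ℝ) (f : stdSimplex ℝ ι) :
    simplexInf N x ≤ N (fun i => (f : ι → ℝ) i * x i) :=
  ciInf_le ⟨0, by rintro _ ⟨f, rfl⟩; exact hN0 _⟩ f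

lemma simplexInf_nonneg (hN0 : ∀ x, 0 ≤ N x) (x : ι → ℝ) : 0 ≤ simplexInf N x :=
  Real.iInf_nonneg fun _ => hN0 _

lemma simplexInf_smul (hN : ∀ c : ℝ, 0 ≤ c → ∀ x, N (c • x) = c * N x) {c : ℝ} (hc : 0 ≤ c)
    (x : ι → ℝ) : simplexInf N (c • x) = c * simplexInf N x := by
  rw [simplexInf, simplexInf, Real.mul_iInf_of_nonneg hc]
  congr 1 with f
  rw [← hN c hc]
  congr 1 with i
  simp only [Pi.smul_apply, smul_eq_mul]
  ring

lemma simplexInf_eq_zero_of_apply_eq_zero (hN0 : ∀ x, 0 ≤ N x)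
    (hN : ∀ c : ℝ, 0 ≤ c → ∀ x, N (c • x) = c * N x) {x : ι → ℝ} {j : ι} (hj : x j = 0) :
    simplexInf N x = 0 := by
  classical
  refine le_antisymm ?_ (simplexInf_nonneg hN0 x)
  have hvertex : (fun i => (Pi.single j 1 : ι → ℝ) i * x i) = 0 := by
    ext i
    by_cases hij : i = j <;> simp [hij, hj]
  have hN_zero : N 0 = 0 := by simpa using hN 0 le_rfl 0
  simpa [hvertex, hN_zero] using simplexInf_le hN0 x ⟨_, single_mem_stdSimplex ℝ j⟩

lemma simplexInf_mul_sum_div_le (hN0 : ∀ x, 0 ≤ N x)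
    (hN : ∀ c : ℝ, 0 ≤ c → ∀ x, N (c • x) = c * N x)
    {x w : ι → ℝ} (hx : ∀ i, 0 < x i) (hw : 0 ≤ w) (f : stdSimplex ℝ ι) :
    simplexInf N x * ∑ i, (f : ι → ℝ) i * w i / x i ≤ N (fun i => (f : ι → ℝ) i * w i) := by
  set S := ∑ i, (f : ι → ℝ) i * w i / x i
  have hterm : ∀ i, 0 ≤ (f : ι → ℝ) i * w i / x i :=
    fun i => div_nonneg (mul_nonneg (f.2.1 i) (hw i)) (hx i).le
  have hS_nonneg : 0 ≤ S := sum_nonneg fun i _ => hterm i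
  rcases hS_nonneg.eq_or_lt with hS | hS
  · rw [← hS, mul_zero]
    exact hN0 _
  have hf' : (fun i => (f : ι → ℝ) i * w i / x i / S) ∈ stdSimplex ℝ ι :=
    ⟨fun i => div_nonneg (hterm i) hS.le, by rw [← sum_div, div_self hS.ne']⟩
  have hscale : (fun i => (f : ι → ℝ) i * w i / x i / S * x i) =
      S⁻¹ • fun i => (f : ι → ℝ) i * w i := by
    ext i
    have hxi := (hx i).ne'
    simp only [Pi.smul_apply, smul_eq_mul]
    field_simp
  have h : simplexInf N x ≤ N (fun i => (f : ι → ℝ) i * w i / x i / S * x i) :=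
    simplexInf_le hN0 x ⟨_, hf'⟩
  rw [hscale, hN _ (inv_nonneg.2 hS.le)] at h
  rwa [← le_div_iff₀ hS, div_eq_inv_mul]

lemma simplexInf_le_mul_sum_div (hN0 : ∀ x, 0 ≤ N x)
    (hN : ∀ c : ℝ, 0 ≤ c → ∀ x, N (c • x) = c * N x) {u z : ι → ℝ} (hu : 0 ≤ u) (huz : u ≤ z)
    (f : stdSimplex ℝ ι) :
    simplexInf N u ≤ N (fun i => (f : ι → ℝ) i * z i) * ∑ i, (f : ι → ℝ) i * u i / z i := by
  rcases (simplexInf_nonneg hN0 u).eq_or_lt with hg | hg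
  · rw [← hg]
    exact mul_nonneg (hN0 _) <| sum_nonneg fun i _ =>
      div_nonneg (mul_nonneg (f.2.1 i) (hu i)) ((hu i).trans (huz i))
  have hu_pos : ∀ i, 0 < u i := fun i =>
    (hu i).lt_of_ne fun h => hg.ne' (simplexInf_eq_zero_of_apply_eq_zero hN0 hN h.symm)
  have hz_pos : ∀ i, 0 < z i := fun i => (hu_pos i).trans_le (huz i)
  set S := ∑ i, (f : ι → ℝ) i * z i / u i
  have hS : 1 ≤ S := calc
    1 = ∑ i, (f : ι → ℝ) i := f.2.2.symm
    _ ≤ S := sum_le_sum fun i _ => by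
      rw [mul_div_assoc]
      exact le_mul_of_one_le_right (f.2.1 i) ((one_le_div (hu_pos i)).2 (huz i))
  have hHM : S⁻¹ ≤ ∑ i, (f : ι → ℝ) i * u i / z i := by
    simpa only [S, mul_div_assoc, inv_div] using
      inv_sum_mul_le_sum_mul_inv (f := (f : ι → ℝ)) f.2 fun i => div_pos (hz_pos i) (hu_pos i)
  calc simplexInf N u = simplexInf N u * S * S⁻¹ := by field_simp
    _ ≤ N (fun i => (f : ι → ℝ) i * z i) * S⁻¹ := mul_le_mul_of_nonneg_right
        (simplexInf_mul_sum_div_le hN0 hN hu_pos (hu.trans huz) f) (by positivity)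
    _ ≤ _ := mul_le_mul_of_nonneg_left hHM (hN0 _)

lemma simplexInf_add_simplexInf_le (hN0 : ∀ x, 0 ≤ N x)
    (hN : ∀ c : ℝ, 0 ≤ c → ∀ x, N (c • x) = c * N x) {u v : ι → ℝ} (hu : 0 ≤ u) (hv : 0 ≤ v) :
    simplexInf N u + simplexInf N v ≤ simplexInf N (u + v) := by
  rcases isEmpty_or_nonempty (stdSimplex ℝ ι) with hΔ | hΔ
  · simp [simplexInf]
  refine le_ciInf fun f => ?_
  have hweights : ∑ i, (f : ι → ℝ) i * u i / (u + v) i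
      + ∑ i, (f : ι → ℝ) i * v i / (u + v) i ≤ 1 := by
    rw [← sum_add_distrib, ← f.2.2]
    refine sum_le_sum fun i _ => ?_
    rw [← add_div, ← mul_add, mul_div_assoc]
    exact mul_le_of_le_one_right (f.2.1 i) (div_self_le_one _)
  calc simplexInf N u + simplexInf N v
      ≤ N (fun i => (f : ι → ℝ) i * (u + v) i) * ∑ i, (f : ι → ℝ) i * u i / (u + v) i
        + N (fun i => (f : ι → ℝ) i * (u + v) i) * ∑ i, (f : ι → ℝ) i * v i / (u + v) i :=
        add_le_add (simplexInf_le_mul_sum_div hN0 hN hu (le_add_of_nonneg_right hv) f)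
          (simplexInf_le_mul_sum_div hN0 hN hv (le_add_of_nonneg_left hu) f)
    _ ≤ N (fun i => (f : ι → ℝ) i * (u + v) i) := by
        rw [← mul_add]
        exact mul_le_of_le_one_right (hN0 _) hweights

theorem concaveOn_simplexInf (hN0 : ∀ x, 0 ≤ N x)
    (hN : ∀ c : ℝ, 0 ≤ c → ∀ x, N (c • x) = c * N x) :
    ConcaveOn ℝ (Set.Ici 0) (simplexInf N) := by
  refine ⟨convex_Ici 0, fun x hx y hy a b ha hb _ => ?_⟩
  rw [smul_eq_mul, smul_eq_mul, ← simplexInf_smul hN ha, ← simplexInf_smul hN hb]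
  exact simplexInf_add_simplexInf_le hN0 hN (smul_nonneg ha hx) (smul_nonneg hb hy)

theorem stmt_1_general (k : ℕ) (N : (Fin k → ℝ) → ℝ)
    (hN0 : ∀ x, 0 ≤ N x)
    (hNsmul : ∀ (c : ℝ) (x), N (c • x) = |c| * N x) :
    ConcaveOn ℝ {x : Fin k → ℝ | ∀ i, 0 ≤ x i}
      (fun x => ⨅ f : stdSimplex ℝ (Fin k), N (fun i => (f : Fin k → ℝ) i * x i)) :=
  concaveOn_simplexInf hN0 fun c hc x => by rw [hNsmul, abs_of_nonneg hc]

/-- For any norm `N` on `ℝ^k`, the function `x ↦ inf_{f ∈ Δ(k)} N (f ⊙ x)`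
is concave on the nonnegative orthant. -/
theorem stmt_1 (k : ℕ) (hk : 0 < k) (N : (Fin k → ℝ) → ℝ)
    (hN0 : ∀ x, 0 ≤ N x)
    (hNadd : ∀ x y, N (x + y) ≤ N x + N y)
    (hNsmul : ∀ (c : ℝ) (x), N (c • x) = |c| * N x)
    (hNzero : ∀ x, N x = 0 ↔ x = 0) :
    ConcaveOn ℝ {x : Fin k → ℝ | ∀ i, 0 ≤ x i}
      (fun x => ⨅ f : stdSimplex ℝ (Fin k), N (fun i => (f : Fin k → ℝ) i * x i)) :=
  stmt_1_general k N hN0 hNsmul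
end

section
/- Let F be the probability simplex in ℝ^k, ‖·‖ any norm on ℝ^k, and x, y vectors in the positive orthant. Then inf_{f∈F} ‖f ⊙ (x+y)‖ ≥ inf_{f∈F} ‖f ⊙ x‖ + inf_{f∈F} ‖f ⊙ y‖. -/
/-!
Substituting `g = f ⊙ x` turns the infimum into `inf_g N g / ∑ i, g i / x i` over nonzero
`g ≥ 0`, by homogeneity of `N`. For fixed `g` the weighted harmonic mean
`x ↦ (∑ i, g i / x i)⁻¹` is superadditive on the positive orthant (termwise Titu's lemma
`(a + b)² / (x + y) ≤ a² / x + b² / y`), and superadditivity survives taking the infimum over `g`.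
-/

open Finset

variable {ι : Type*}

theorem add_sq_div_add_le (a b : ℝ) {x y : ℝ} (hx : 0 < x) (hy : 0 < y) :
    (a + b) ^ 2 / (x + y) ≤ a ^ 2 / x + b ^ 2 / y := by
  simpa [Fin.sum_univ_two] using
    sq_sum_div_le_sum_sq_div univ ![a, b] (g := ![x, y]) (by simp [Fin.forall_fin_two, hx, hy])

/-- With `h`, `a`, `b` the three sums, this is `a⁻¹ + b⁻¹ ≤ h⁻¹` cleared of denominators, so that
it also holds when `c` vanishes on `s`. -/
theorem sum_div_add_mul_le_mul (s : Finset ι) {c x y : ι → ℝ} (hc : ∀ i ∈ s, 0 ≤ c i)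
    (hx : ∀ i ∈ s, 0 < x i) (hy : ∀ i ∈ s, 0 < y i) :
    (∑ i ∈ s, c i / (x i + y i)) * ((∑ i ∈ s, c i / x i) + ∑ i ∈ s, c i / y i)
      ≤ (∑ i ∈ s, c i / x i) * ∑ i ∈ s, c i / y i := by
  set a := ∑ i ∈ s, c i / x i
  set b := ∑ i ∈ s, c i / y i
  have ha : 0 ≤ a := sum_nonneg fun i hi => div_nonneg (hc i hi) (hx i hi).le
  have hb : 0 ≤ b := sum_nonneg fun i hi => div_nonneg (hc i hi) (hy i hi).le
  have key : (∑ i ∈ s, c i / (x i + y i)) * (a + b) * (a + b) ≤ a * b * (a + b) :=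
    calc (∑ i ∈ s, c i / (x i + y i)) * (a + b) * (a + b)
        = ∑ i ∈ s, c i * ((b + a) ^ 2 / (x i + y i)) := by
          rw [mul_assoc, sum_mul]; congr! 1 with i; ring
      _ ≤ ∑ i ∈ s, c i * (b ^ 2 / x i + a ^ 2 / y i) := sum_le_sum fun i hi =>
          mul_le_mul_of_nonneg_left (add_sq_div_add_le b a (hx i hi) (hy i hi)) (hc i hi)
      _ = ∑ i ∈ s, (b ^ 2 * (c i / x i) + a ^ 2 * (c i / y i)) :=
          sum_congr rfl fun i _ => by ring
      _ = b ^ 2 * a + a ^ 2 * b := by rw [sum_add_distrib, ← mul_sum, ← mul_sum]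
      _ = a * b * (a + b) := by ring
  rcases (add_nonneg ha hb).eq_or_lt with hab | hab
  · rw [← hab, mul_zero]; exact mul_nonneg ha hb
  · exact le_of_mul_le_mul_right key hab

theorem iInf_stdSimplex_mul_le_div [Fintype ι] {N : (ι → ℝ) → ℝ} (hN0 : ∀ v, 0 ≤ N v)
    (hN : ∀ c : ℝ, 0 ≤ c → ∀ v, N (c • v) = c * N v) {x g : ι → ℝ} (hx : ∀ i, 0 < x i)
    (hg : ∀ i, 0 ≤ g i) (ha : 0 < ∑ i, g i / x i) :
    ⨅ f : stdSimplex ℝ ι, N (fun i => f.1 i * x i) ≤ N g / ∑ i, g i / x i := by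
  set a := ∑ i, g i / x i
  have hf : (fun i => a⁻¹ * (g i / x i)) ∈ stdSimplex ℝ ι :=
    ⟨fun i => mul_nonneg (inv_nonneg.2 ha.le) (div_nonneg (hg i) (hx i).le),
      by rw [← mul_sum, inv_mul_cancel₀ ha.ne']⟩
  have hfx : (fun i => a⁻¹ * (g i / x i) * x i) = a⁻¹ • g := by
    ext i
    simp only [Pi.smul_apply, smul_eq_mul, mul_assoc, div_mul_cancel₀ _ (hx i).ne']
  calc ⨅ f : stdSimplex ℝ ι, N (fun i => f.1 i * x i)
      ≤ N (fun i => a⁻¹ * (g i / x i) * x i) :=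
        ciInf_le ⟨0, by rintro _ ⟨f, rfl⟩; exact hN0 _⟩ (⟨_, hf⟩ : stdSimplex ℝ ι)
    _ = N g / a := by rw [hfx, hN _ (inv_nonneg.2 ha.le), inv_mul_eq_div]

theorem iInf_stdSimplex_mul_add_ge [Fintype ι] {N : (ι → ℝ) → ℝ} (hN0 : ∀ v, 0 ≤ N v)
    (hN : ∀ c : ℝ, 0 ≤ c → ∀ v, N (c • v) = c * N v) {x y : ι → ℝ} (hx : ∀ i, 0 < x i)
    (hy : ∀ i, 0 < y i) :
    (⨅ f : stdSimplex ℝ ι, N (fun i => f.1 i * x i))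
      + (⨅ f : stdSimplex ℝ ι, N (fun i => f.1 i * y i))
      ≤ ⨅ f : stdSimplex ℝ ι, N (fun i => f.1 i * (x i + y i)) := by
  rcases isEmpty_or_nonempty (stdSimplex ℝ ι) with _ | _
  · simp
  refine le_ciInf fun ⟨f, hf0, hf1⟩ => ?_
  set c := fun i => f i * (x i + y i)
  have hc : ∀ i, 0 ≤ c i := fun i => mul_nonneg (hf0 i) (add_pos (hx i) (hy i)).le
  have hsum_one : ∑ i, c i / (x i + y i) = 1 := by
    rw [← hf1]; exact sum_congr rfl fun i _ => mul_div_cancel_right₀ _ (add_pos (hx i) (hy i)).ne'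
  have hpos (z : ι → ℝ) (hz : ∀ i, 0 < z i) (hle : ∀ i, z i ≤ x i + y i) :
      0 < ∑ i, c i / z i :=
    calc (0 : ℝ) < ∑ i, c i / (x i + y i) := hsum_one ▸ one_pos
      _ ≤ ∑ i, c i / z i := sum_le_sum fun i _ => div_le_div_of_nonneg_left (hc i) (hz i) (hle i)
  have ha := hpos x hx fun i => le_add_of_nonneg_right (hy i).le
  have hb := hpos y hy fun i => le_add_of_nonneg_left (hx i).le
  have hab := sum_div_add_mul_le_mul univ (fun i _ => hc i) (fun i _ => hx i) (fun i _ => hy i)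
  rw [hsum_one, one_mul] at hab
  set a := ∑ i, c i / x i
  set b := ∑ i, c i / y i
  calc _ ≤ N c / a + N c / b :=
        add_le_add (iInf_stdSimplex_mul_le_div hN0 hN hx hc ha)
          (iInf_stdSimplex_mul_le_div hN0 hN hy hc hb)
    _ = N c * (a + b) / (a * b) := by field_simp; ring
    _ ≤ N c := (div_le_iff₀ (mul_pos ha hb)).2 (mul_le_mul_of_nonneg_left hab (hN0 c))

theorem stmt_2_general (k : ℕ) (N : (Fin k → ℝ) → ℝ)
    (hN0 : ∀ x, 0 ≤ N x)
    (hNsmul : ∀ (c : ℝ) (x), N (c • x) = |c| * N x)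
    (x y : Fin k → ℝ) (hx : ∀ i, 0 < x i) (hy : ∀ i, 0 < y i) :
    (⨅ f : stdSimplex ℝ (Fin k), N (fun i => (f : Fin k → ℝ) i * x i))
      + (⨅ f : stdSimplex ℝ (Fin k), N (fun i => (f : Fin k → ℝ) i * y i))
      ≤ ⨅ f : stdSimplex ℝ (Fin k), N (fun i => (f : Fin k → ℝ) i * (x i + y i)) :=
  iInf_stdSimplex_mul_add_ge hN0 (fun c hc v => by rw [hNsmul, abs_of_nonneg hc]) hx hy

/-- Superadditivity of `x ↦ inf_{f ∈ Δ(k)} N (f ⊙ x)` over the positive orthant,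
for any norm `N` on `ℝ^k`. -/
theorem stmt_2 (k : ℕ) (hk : 0 < k) (N : (Fin k → ℝ) → ℝ)
    (hN0 : ∀ x, 0 ≤ N x)
    (hNadd : ∀ x y, N (x + y) ≤ N x + N y)
    (hNsmul : ∀ (c : ℝ) (x), N (c • x) = |c| * N x)
    (hNzero : ∀ x, N x = 0 ↔ x = 0)
    (x y : Fin k → ℝ) (hx : ∀ i, 0 < x i) (hy : ∀ i, 0 < y i) :
    (⨅ f : stdSimplex ℝ (Fin k), N (fun i => (f : Fin k → ℝ) i * x i))
      + (⨅ f : stdSimplex ℝ (Fin k), N (fun i => (f : Fin k → ℝ) i * y i))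
      ≤ ⨅ f : stdSimplex ℝ (Fin k), N (fun i => (f : Fin k → ℝ) i * (x i + y i)) :=
  stmt_2_general k N hN0 hNsmul x y hx hy
end

section
/- Let f ∈ Δ(k) and x, y ∈ ℝ^k with strictly positive coordinates. Define Z_g = Σ_i f_i (1 + y_i/x_i) and Z_h = Σ_i f_i (1 + x_i/y_i). Then 1/Z_g + 1/Z_h ≤ 1. -/
/-!
Writing `A = ∑ f i * (y i / x i)` and `B = ∑ f i * (x i / y i)`, the two normalisers are
`1 + A` and `1 + B`, and Cauchy–Schwarz with weights `f` gives `A * B ≥ (∑ f i) ^ 2 = 1`.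
The claim `1 / (1 + A) + 1 / (1 + B) ≤ 1` clears denominators to exactly `1 ≤ A * B`.
-/

open Finset

lemma one_div_one_add_add_one_div_one_add_le_one {a b : ℝ} (ha : 0 ≤ a) (hb : 0 ≤ b)
    (hab : 1 ≤ a * b) : 1 / (1 + a) + 1 / (1 + b) ≤ 1 := by
  rw [div_add_div _ _ (by positivity) (by positivity), div_le_one (by positivity)]
  nlinarith

lemma sq_sum_le_sum_mul_div_mul_sum_mul_div {ι : Type*} (s : Finset ι) {w p q : ι → ℝ}
    (hw : ∀ i ∈ s, 0 ≤ w i) (hp : ∀ i ∈ s, 0 < p i) (hq : ∀ i ∈ s, 0 < q i) :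
    (∑ i ∈ s, w i) ^ 2 ≤ (∑ i ∈ s, w i * (p i / q i)) * ∑ i ∈ s, w i * (q i / p i) := by
  refine sum_sq_le_sum_mul_sum_of_sq_le_mul s
    (fun i hi => by have := hw i hi; have := hp i hi; have := hq i hi; positivity)
    (fun i hi => by have := hw i hi; have := hp i hi; have := hq i hi; positivity)
    (fun i hi => le_of_eq ?_)
  have := (hp i hi).ne'
  have := (hq i hi).ne'
  field_simp

theorem stmt_3_general (k : ℕ) (f x y : Fin k → ℝ)
    (hf : f ∈ stdSimplex ℝ (Fin k))
    (hx : ∀ i, 0 < x i) (hy : ∀ i, 0 < y i) :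
    1 / (∑ i, f i * (1 + y i / x i)) + 1 / (∑ i, f i * (1 + x i / y i)) ≤ 1 := by
  obtain ⟨hf0, hf1⟩ := hf
  have hCS := sq_sum_le_sum_mul_div_mul_sum_mul_div univ
    (fun i _ => hf0 i) (fun i _ => hy i) (fun i _ => hx i)
  rw [hf1, one_pow] at hCS
  simp only [mul_add, mul_one, sum_add_distrib, hf1]
  exact one_div_one_add_add_one_div_one_add_le_one
    (sum_nonneg fun i _ => mul_nonneg (hf0 i) (div_pos (hy i) (hx i)).le)
    (sum_nonneg fun i _ => mul_nonneg (hf0 i) (div_pos (hx i) (hy i)).le) hCS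

/-- For `f` in the probability simplex and `x, y` with strictly positive coordinates,
with `Z_g = ∑ i, f i (1 + y i / x i)` and `Z_h = ∑ i, f i (1 + x i / y i)`,
one has `1/Z_g + 1/Z_h ≤ 1`. -/
theorem stmt_3 (k : ℕ) (f x y : Fin k → ℝ)
    (hf : f ∈ stdSimplex ℝ (Fin k))
    (hx : ∀ i, 0 < x i) (hy : ∀ i, 0 < y i)
    (hfpos : ∃ i, 0 < f i) :
    1 / (∑ i, f i * (1 + y i / x i)) + 1 / (∑ i, f i * (1 + x i / y i)) ≤ 1 :=
  stmt_3_general k f x y hf hx hy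
end

section
/- For any real q with 2 ≤ q < ∞, the function G(z) = ‖z‖_q^2 on ℝ^d is (2(q−1), 2)-uniformly smooth; that is, for all z, z' ∈ ℝ^d, ‖z‖_q^2 ≤ ‖z'‖_q^2 + ⟨∇(‖·‖_q^2)(z'), z − z'⟩ + (q−1)‖z − z'‖_q^2. -/
/-!
Restrict `G = ‖·‖_q²` to the line `t ↦ x + t • u` and write `G (x + t • u) = S(t) ^ (2 / q)` with
`S(t) = ∑ |x i + t u i| ^ q`. Away from the origin this is twice differentiable, and in its second
derivative the term in `S'(t)²` has the coefficient `(2/q)(2/q - 1) ≤ 0`, while Hölder's inequality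
with exponents `q / (q - 2)` and `q / 2` bounds the term in `S''(t)` by `2 (q - 1) ‖u‖_q²`. A
second-order Taylor bound on `[0, 1]` then gives the inequality. If the line passes through the
origin, `t ↦ G (x + t • u)` is the quadratic `(t - t₀)² ‖u‖_q²` and the inequality reduces to
`q ≥ 2`; at `x = 0` the derivative vanishes because `0` is a minimum of `G`.
-/

open Real Set Filter Asymptotics Topology

theorem image_le_add_deriv_mul_add_of_deriv2_le {f f' f'' : ℝ → ℝ} {a b M : ℝ}
    (hf : ∀ t ∈ Icc a b, HasDerivAt f (f' t) t)
    (hf' : ∀ t ∈ Icc a b, HasDerivAt f' (f'' t) t)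
    (hM : ∀ t ∈ Icc a b, f'' t ≤ M) :
    ∀ t ∈ Icc a b, f t ≤ f a + f' a * (t - a) + M / 2 * (t - a) ^ 2 := by
  have hf'_le : ∀ t ∈ Icc a b, f' t ≤ f' a + M * (t - a) := by
    refine image_le_of_deriv_right_le_deriv_boundary (f' := f'') (B' := fun _ => M)
      (fun t ht => (hf' t ht).continuousAt.continuousWithinAt)
      (fun t ht => (hf' t (Ico_subset_Icc_self ht)).hasDerivWithinAt) (by simp) (by fun_prop)
      (fun t _ => ?_) (fun t ht => hM t (Ico_subset_Icc_self ht))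
    simpa using
      (((hasDerivAt_id' t).sub_const a).const_mul M).const_add (f' a) |>.hasDerivWithinAt
  refine image_le_of_deriv_right_le_deriv_boundary (f' := f')
    (B' := fun t => f' a + M * (t - a))
    (fun t ht => (hf t ht).continuousAt.continuousWithinAt)
    (fun t ht => (hf t (Ico_subset_Icc_self ht)).hasDerivWithinAt) (by simp) (by fun_prop)
    (fun t _ => ?_) (fun t ht => hf'_le t (Ico_subset_Icc_self ht))
  have := ((((hasDerivAt_id' t).sub_const a).const_mul (f' a)).const_add (f a)).fun_add
    ((((hasDerivAt_id' t).sub_const a).fun_pow 2).const_mul (M / 2))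
  exact (this.congr_deriv (by ring)).hasDerivWithinAt

theorem hasDerivAt_abs_rpow_mul_self {p : ℝ} (hp : 0 ≤ p) (x : ℝ) :
    HasDerivAt (fun y => |y| ^ p * y) ((p + 1) * |x| ^ p) x := by
  rcases hp.eq_or_lt with rfl | hp
  · simpa using hasDerivAt_id' x
  rcases eq_or_ne x 0 with rfl | hx
  · rw [abs_zero, zero_rpow hp.ne', mul_zero, hasDerivAt_iff_isLittleO_nhds_zero]
    have h0 : Tendsto (fun h : ℝ => |h| ^ p) (𝓝 0) (𝓝 0) := by
      simpa [zero_rpow hp.ne'] using (continuous_abs.rpow_const fun _ => Or.inr hp.le).tendsto 0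
    simpa using ((isLittleO_one_iff ℝ).2 h0).mul_isBigO (isBigO_refl (fun h : ℝ => h) _)
  · have hx' : |x| ≠ 0 := abs_ne_zero.2 hx
    have hpow : |x| ^ (p - 1) * |x| = |x| ^ p := by rw [rpow_sub_one hx', div_mul_cancel₀ _ hx']
    refine (((hasDerivAt_abs hx).rpow_const (Or.inl hx')).fun_mul (hasDerivAt_id' x)).congr_deriv ?_
    linear_combination p * |x| ^ (p - 1) * sign_mul_self x + p * hpow

variable {ι : Type*} [Fintype ι]

noncomputable def lpNormSq (q : ℝ) (x : ι → ℝ) : ℝ := (∑ i, |x i| ^ q) ^ (2 / q)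

theorem lpNormSq_nonneg (q : ℝ) (x : ι → ℝ) : 0 ≤ lpNormSq q x := by
  unfold lpNormSq; positivity

theorem lpNormSq_zero {q : ℝ} (hq : q ≠ 0) : lpNormSq q (0 : ι → ℝ) = 0 := by
  simp [lpNormSq, zero_rpow hq, zero_rpow (div_ne_zero two_ne_zero hq)]

theorem lpNormSq_smul {q : ℝ} (hq : 0 < q) (c : ℝ) (x : ι → ℝ) :
    lpNormSq q (c • x) = c ^ 2 * lpNormSq q x := by
  have hsum : ∑ i, |(c • x) i| ^ q = |c| ^ q * ∑ i, |x i| ^ q := by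
    simp [Finset.mul_sum, abs_mul, mul_rpow (abs_nonneg _) (abs_nonneg _)]
  rw [lpNormSq, lpNormSq, hsum, mul_rpow (by positivity) (by positivity),
    ← rpow_mul (abs_nonneg c), mul_div_cancel₀ _ hq.ne', rpow_two, sq_abs]

theorem sum_abs_rpow_pos {q : ℝ} {x : ι → ℝ} (hx : x ≠ 0) : 0 < ∑ i, |x i| ^ q := by
  obtain ⟨i, hi⟩ := Function.ne_iff.1 hx
  exact Finset.sum_pos' (fun j _ => by positivity)
    ⟨i, Finset.mem_univ _, rpow_pos_of_pos (abs_pos.2 hi) _⟩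

theorem fderiv_lpNormSq_zero {q : ℝ} (hq : q ≠ 0) : fderiv ℝ (lpNormSq q) (0 : ι → ℝ) = 0 :=
  IsLocalMin.fderiv_eq_zero <| .of_forall fun x => by
    rw [lpNormSq_zero hq]; exact lpNormSq_nonneg q x

theorem differentiableAt_lpNormSq {q : ℝ} (hq : 1 < q) {x : ι → ℝ} (hx : x ≠ 0) :
    DifferentiableAt ℝ (lpNormSq q) x := by
  have hS : DifferentiableAt ℝ (fun w : ι → ℝ => ∑ i, |w i| ^ q) x :=
    DifferentiableAt.fun_sum fun i _ =>
      DifferentiableAt.fun_comp' (g := fun y : ℝ => |y| ^ q) x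
        (hasDerivAt_abs_rpow (x i) hq).differentiableAt (differentiableAt_apply i x)
  exact hS.rpow_const (Or.inl (sum_abs_rpow_pos hx).ne')

theorem sum_abs_rpow_sub_two_mul_sq_le {q : ℝ} (hq : 2 ≤ q) (x u : ι → ℝ) :
    ∑ i, |x i| ^ (q - 2) * u i ^ 2 ≤
      (∑ i, |x i| ^ q) ^ ((q - 2) / q) * (∑ i, |u i| ^ q) ^ (2 / q) := by
  rcases hq.eq_or_lt with rfl | hq
  · simp
  have hq2 : 0 < q - 2 := by linarith
  have hpq : HolderConjugate (q / (q - 2)) (q / 2) := by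
    rw [holderConjugate_iff]
    refine ⟨by rw [lt_div_iff₀ hq2]; linarith, ?_⟩
    field_simp; ring
  have := inner_le_Lp_mul_Lq_of_nonneg Finset.univ hpq (f := fun i => |x i| ^ (q - 2))
    (g := fun i => |u i| ^ (2 : ℝ)) (fun i _ => by positivity) (fun i _ => by positivity)
  simp only [← rpow_mul (abs_nonneg _), one_div_div] at this
  convert this using 4 with i
  · rw [rpow_two, sq_abs]
  · field_simp
  · field_simp

theorem hasDerivAt_sum_abs_rpow_line {q : ℝ} (hq : 1 < q) (x u : ι → ℝ) (t : ℝ) :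
    HasDerivAt (fun s => ∑ i, |x i + s * u i| ^ q)
      (∑ i, q * (|x i + t * u i| ^ (q - 2) * (x i + t * u i)) * u i) t :=
  HasDerivAt.fun_sum fun i _ => ((hasDerivAt_abs_rpow _ hq).comp t
    ((hasDerivAt_mul_const (u i)).const_add (x i))).congr_deriv (by ring)

theorem hasDerivAt_sum_abs_rpow_mul_line {q : ℝ} (hq : 2 ≤ q) (x u : ι → ℝ) (t : ℝ) :
    HasDerivAt (fun s => ∑ i, q * (|x i + s * u i| ^ (q - 2) * (x i + s * u i)) * u i)
      (∑ i, q * (q - 1) * (|x i + t * u i| ^ (q - 2) * u i ^ 2)) t :=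
  HasDerivAt.fun_sum fun i _ => ((((hasDerivAt_abs_rpow_mul_self (sub_nonneg.2 hq) _).comp t
    ((hasDerivAt_mul_const (u i)).const_add (x i))).const_mul q).mul_const (u i)).congr_deriv
    (by ring)

theorem lpNormSq_add_le_of_add_smul_ne_zero {q : ℝ} (hq : 2 ≤ q) {x u : ι → ℝ}
    (hline : ∀ t : ℝ, x + t • u ≠ 0) :
    lpNormSq q (x + u) ≤ lpNormSq q x + fderiv ℝ (lpNormSq q) x u + (q - 1) * lpNormSq q u := by
  have hq0 : 0 < q := by linarith
  set S : ℝ → ℝ := fun t => ∑ i, |x i + t * u i| ^ q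
  set A : ℝ → ℝ := fun t => ∑ i, q * (|x i + t * u i| ^ (q - 2) * (x i + t * u i)) * u i
  set B : ℝ → ℝ := fun t => ∑ i, q * (q - 1) * (|x i + t * u i| ^ (q - 2) * u i ^ 2)
  set f' : ℝ → ℝ := fun t => A t * (2 / q) * S t ^ (2 / q - 1)
  have hS : ∀ t, 0 < S t := fun t => by simpa [S] using sum_abs_rpow_pos (q := q) (hline t)
  have hf : ∀ t, HasDerivAt (fun t => lpNormSq q (x + t • u)) (f' t) t := by
    intro t
    convert (hasDerivAt_sum_abs_rpow_line (by linarith) x u t).rpow_const (Or.inl (hS t).ne')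
      using 1
    funext s; simp [lpNormSq]
  have hf' : ∀ t, HasDerivAt f' (B t * (2 / q) * S t ^ (2 / q - 1)
      + A t * (2 / q) * (A t * (2 / q - 1) * S t ^ (2 / q - 1 - 1))) t := fun t =>
    ((hasDerivAt_sum_abs_rpow_mul_line hq x u t).mul_const (2 / q)).fun_mul
      ((hasDerivAt_sum_abs_rpow_line (by linarith) x u t).rpow_const (Or.inl (hS t).ne'))
  have hf'' : ∀ t, B t * (2 / q) * S t ^ (2 / q - 1)
      + A t * (2 / q) * (A t * (2 / q - 1) * S t ^ (2 / q - 1 - 1))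
      ≤ 2 * (q - 1) * lpNormSq q u := by
    intro t
    have hB : B t ≤ q * (q - 1) * (S t ^ ((q - 2) / q) * lpNormSq q u) := by
      simp only [B, S, lpNormSq, ← Finset.mul_sum]
      exact mul_le_mul_of_nonneg_left
        (sum_abs_rpow_sub_two_mul_sq_le hq (fun i => x i + t * u i) u) (by nlinarith)
    have hA : A t * (2 / q) * (A t * (2 / q - 1) * S t ^ (2 / q - 1 - 1)) ≤ 0 := by
      have hcoef : (2 / q - 1) * S t ^ (2 / q - 1 - 1) ≤ 0 :=
        mul_nonpos_of_nonpos_of_nonneg (by rw [sub_nonpos, div_le_one hq0]; exact hq)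
          (rpow_nonneg (hS t).le _)
      calc _ = A t ^ 2 * (2 / q) * ((2 / q - 1) * S t ^ (2 / q - 1 - 1)) := by ring
        _ ≤ 0 := mul_nonpos_of_nonneg_of_nonpos (by positivity) hcoef
    have hexp : S t ^ ((q - 2) / q) * S t ^ (2 / q - 1) = 1 := by
      rw [← rpow_add (hS t), show (q - 2) / q + (2 / q - 1) = 0 by field_simp; ring, rpow_zero]
    calc _ ≤ q * (q - 1) * (S t ^ ((q - 2) / q) * lpNormSq q u) * (2 / q) * S t ^ (2 / q - 1)
            + 0 := add_le_add (by gcongr) hA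
      _ = 2 * (q - 1) * lpNormSq q u * (S t ^ ((q - 2) / q) * S t ^ (2 / q - 1)) := by
          field_simp; ring
      _ = 2 * (q - 1) * lpNormSq q u := by rw [hexp, mul_one]
  have hderiv : fderiv ℝ (lpNormSq q) x u = f' 0 := by
    rw [← (differentiableAt_lpNormSq (by linarith) (by simpa using hline 0)).lineDeriv_eq_fderiv]
    exact HasLineDerivAt.lineDeriv (hf 0)
  have := image_le_add_deriv_mul_add_of_deriv2_le (fun t _ => hf t) (fun t _ => hf' t)
    (fun t _ => hf'' t) 1 ⟨zero_le_one, le_rfl⟩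
  simp only [one_smul, zero_smul, add_zero, sub_zero, one_pow, mul_one] at this
  linarith

theorem lpNormSq_add_le_of_add_smul_eq_zero {q : ℝ} (hq : 2 ≤ q) {x u : ι → ℝ} (hx : x ≠ 0)
    {t₀ : ℝ} (ht₀ : x + t₀ • u = 0) :
    lpNormSq q (x + u) ≤ lpNormSq q x + fderiv ℝ (lpNormSq q) x u + (q - 1) * lpNormSq q u := by
  set K := lpNormSq q u
  have hline : (fun t : ℝ => lpNormSq q (x + t • u)) = fun t => (t - t₀) ^ 2 * K := by
    funext t
    rw [← lpNormSq_smul (by linarith)]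
    congr 1
    linear_combination (norm := module) ht₀
  have hderiv : fderiv ℝ (lpNormSq q) x u = 2 * (0 - t₀) * K := by
    rw [← (differentiableAt_lpNormSq (by linarith) hx).lineDeriv_eq_fderiv]
    refine HasLineDerivAt.lineDeriv ?_
    unfold HasLineDerivAt
    rw [hline]
    exact ((((hasDerivAt_id' 0).sub_const t₀).fun_pow 2).mul_const K).congr_deriv (by ring)
  have h1 := congrFun hline 1
  have h0 := congrFun hline 0
  simp only [one_smul, zero_smul, add_zero] at h1 h0
  rw [h1, h0, hderiv]
  nlinarith [mul_nonneg (sub_nonneg.2 hq) (lpNormSq_nonneg q u)]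

theorem lpNormSq_add_le {q : ℝ} (hq : 2 ≤ q) (x u : ι → ℝ) :
    lpNormSq q (x + u) ≤ lpNormSq q x + fderiv ℝ (lpNormSq q) x u + (q - 1) * lpNormSq q u := by
  by_cases hx : x = 0
  · subst hx
    rw [fderiv_lpNormSq_zero (by linarith), lpNormSq_zero (by linarith),
      zero_apply, zero_add, add_zero]
    nlinarith [lpNormSq_nonneg q u]
  by_cases hline : ∃ t : ℝ, x + t • u = 0
  · obtain ⟨t₀, ht₀⟩ := hline
    exact lpNormSq_add_le_of_add_smul_eq_zero hq hx ht₀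
  · push Not at hline
    exact lpNormSq_add_le_of_add_smul_ne_zero hq hline

/-- For `2 ≤ q < ∞`, the squared `ℓ_q` norm `G(z) = ‖z‖_q²` on `ℝ^d` is
`(2(q−1), 2)`-uniformly smooth:
`‖z‖_q² ≤ ‖z'‖_q² + ⟨∇G(z'), z − z'⟩ + (q−1)‖z − z'‖_q²`. -/
theorem stmt_4 (d : ℕ) (q : ℝ) (hq : 2 ≤ q) :
    ∀ z z' : Fin d → ℝ,
      (∑ i, |z i| ^ q) ^ (2 / q)
        ≤ (∑ i, |z' i| ^ q) ^ (2 / q)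
          + fderiv ℝ (fun w : Fin d → ℝ => (∑ i, |w i| ^ q) ^ (2 / q)) z' (z - z')
          + (q - 1) * ((∑ i, |(z - z') i| ^ q) ^ (1 / q)) ^ 2 := by
  intro z z'
  have hnorm : ((∑ i, |(z - z') i| ^ q) ^ (1 / q)) ^ 2 = lpNormSq q (z - z') := by
    rw [lpNormSq, ← rpow_natCast, ← rpow_mul (by positivity)]
    ring_nf
  have := lpNormSq_add_le hq z' (z - z')
  rw [add_sub_cancel] at this
  rw [hnorm]
  exact this
end

section
/- Let F : ℝ^T → ℝ be (σ,p)-uniformly smooth in each of its T arguments with respect to a norm ‖·‖ on a space H, with F(0,...,0) = 0. Then for all z_1,...,z_T ∈ H, F(z_1,...,z_T) ≤ Σ_{t=1}^T ⟨∇_t F(z_1,...,z_{t-1},0,...,0), z_t⟩ + (σ/p) Σ_{t=1}^T ‖z_t‖^p, where ∇_t denotes the gradient in the t-th argument. -/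
/-!
Telescoping along the chain `0 = w₀, w₁, …, w_T = z`, where `wₖ` keeps the first `k`
coordinates of `z` and zeroes the rest: `wₖ₊₁` differs from `wₖ` only in coordinate `k`,
which goes from `0` to `zₖ`, so smoothness in that coordinate at the point `wₖ` bounds
`F wₖ₊₁ - F wₖ` by `⟨∇ₖF(wₖ), zₖ⟩ + (σ/p)‖zₖ‖^p`.
-/

section ZeroFrom

variable {M : Type*} [Zero M] {T : ℕ}

def zeroFrom (z : Fin T → M) (k : ℕ) : Fin T → M :=
  fun s => if (s : ℕ) < k then z s else 0

@[simp]
lemma zeroFrom_zero (z : Fin T → M) : zeroFrom z 0 = 0 := by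
  funext s
  simp [zeroFrom]

lemma zeroFrom_of_le (z : Fin T → M) {k : ℕ} (hk : T ≤ k) : zeroFrom z k = z := by
  funext s
  simp [zeroFrom, lt_of_lt_of_le s.isLt hk]

lemma zeroFrom_succ (z : Fin T → M) (t : Fin T) :
    zeroFrom z (t + 1) = Function.update (zeroFrom z t) t (z t) := by
  funext s
  rcases eq_or_ne s t with rfl | hst
  · simp [zeroFrom]
  · have hst' : (s : ℕ) ≠ t := Fin.val_ne_of_ne hst
    simp only [zeroFrom, Function.update_of_ne hst]
    congr 1
    exact propext (by omega)

@[simp]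
lemma update_zeroFrom_self (z : Fin T → M) (t : Fin T) :
    Function.update (zeroFrom z t) t 0 = zeroFrom z t := by
  funext s
  rcases eq_or_ne s t with rfl | hst
  · simp [zeroFrom]
  · simp [Function.update_of_ne hst]

lemma le_add_sum_of_zeroFrom_succ_le (F : (Fin T → M) → ℝ) (z : Fin T → M) (c : Fin T → ℝ)
    (hstep : ∀ t : Fin T, F (zeroFrom z (t + 1)) ≤ F (zeroFrom z t) + c t) :
    F z ≤ F 0 + ∑ t, c t := by
  have htelescope : ∑ t : Fin T, (F (zeroFrom z (t + 1)) - F (zeroFrom z t)) = F z - F 0 := by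
    rw [Fin.sum_univ_eq_sum_range (fun k => F (zeroFrom z (k + 1)) - F (zeroFrom z k)),
      Finset.sum_range_sub (fun k => F (zeroFrom z k)), zeroFrom_of_le z le_rfl, zeroFrom_zero]
  have hle : ∑ t : Fin T, (F (zeroFrom z (t + 1)) - F (zeroFrom z t)) ≤ ∑ t, c t :=
    Finset.sum_le_sum fun t _ => sub_le_iff_le_add'.mpr (hstep t)
  linarith

end ZeroFrom

theorem stmt_5_general {H : Type*} [NormedAddCommGroup H] [NormedSpace ℝ H]
    (T : ℕ) (p σ : ℝ)
    (F : (Fin T → H) → ℝ) (D : (Fin T → H) → Fin T → (H →L[ℝ] ℝ))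
    (hF0 : F (fun _ => 0) = 0)
    (hsmooth : ∀ (z : Fin T → H) (t : Fin T) (a b : H),
      F (Function.update z t a) ≤ F (Function.update z t b)
        + D (Function.update z t b) t (a - b) + σ / p * ‖a - b‖ ^ p) :
    ∀ z : Fin T → H,
      F z ≤ (∑ t : Fin T, D (fun s => if (s : ℕ) < (t : ℕ) then z s else 0) t (z t))
        + σ / p * ∑ t, ‖z t‖ ^ p := by
  intro z
  have hstep : ∀ t : Fin T, F (zeroFrom z (t + 1)) ≤
      F (zeroFrom z t) + (D (zeroFrom z t) t (z t) + σ / p * ‖z t‖ ^ p) := by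
    intro t
    have h := hsmooth (zeroFrom z t) t (z t) 0
    rw [← zeroFrom_succ, update_zeroFrom_self, sub_zero] at h
    linarith
  have h := le_add_sum_of_zeroFrom_succ_le F z _ hstep
  rw [Pi.zero_def, hF0, zero_add, Finset.sum_add_distrib, ← Finset.mul_sum] at h
  exact h

/-- If `F : H^T → ℝ` is `(σ,p)`-uniformly smooth in each of its arguments
(with partial gradients `D`) and `F(0,…,0) = 0`, then
`F(z₁,…,z_T) ≤ ∑ₜ ⟨∇ₜF(z₁,…,z_{t−1},0,…,0), zₜ⟩ + (σ/p) ∑ₜ ‖zₜ‖^p`. -/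
theorem stmt_5 {H : Type*} [NormedAddCommGroup H] [NormedSpace ℝ H]
    (T : ℕ) (p σ : ℝ) (hp : 1 < p) (hp2 : p ≤ 2) (hσ : 0 ≤ σ)
    (F : (Fin T → H) → ℝ) (D : (Fin T → H) → Fin T → (H →L[ℝ] ℝ))
    (hF0 : F (fun _ => 0) = 0)
    (hsmooth : ∀ (z : Fin T → H) (t : Fin T) (a b : H),
      F (Function.update z t a) ≤ F (Function.update z t b)
        + D (Function.update z t b) t (a - b) + σ / p * ‖a - b‖ ^ p) :
    ∀ z : Fin T → H,
      F z ≤ (∑ t : Fin T, D (fun s => if (s : ℕ) < (t : ℕ) then z s else 0) t (z t))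
        + σ / p * ∑ t, ‖z t‖ ^ p :=
  stmt_5_general T p σ F D hF0 hsmooth
end

section
/- Let H = {0,1,...,k} and let Φ be a class of functions with fat-shattering dimension at scale 2 equal to d on (F×X)-valued trees, via a payoff map (φ, f, x) ↦ ℓ_φ(f,x) ∈ H. Then the ℓ_∞ covering number at scale 1/2 over trees of depth T satisfies N_∞(1/2, Φ, T) ≤ Σ_{i=0}^d C(T,i) k^i ≤ (ekT)^d, and for T ≥ d, Σ_{i=0}^d C(T,i) k^i ≤ (ekT/d)^d. -/
/-!
Induction on the depth, as in Sauer–Shelah. Split `G` by the value `j ∈ {0,…,k}` its functions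
take at the root `z`. If two level sets whose values are at least `2` apart both shattered trees
of depth `d`, then `G` would shatter a tree of depth `d + 1`; hence all level sets of dimension
`d` sit at two adjacent values `a, a + 1`. That class is `1/2`-close to `a + 1/2` at the root and
keeps dimension `≤ d`, while each of the at most `k` other level sets has dimension `≤ d - 1`.
Covering both subtrees recursively, the cover sizes obey `N(d, T + 1) ≤ N(d, T) + k N(d - 1, T)`,
Pascal's rule for `∑_{i ≤ d} C(T,i) k^i`. The numerical bounds follow from `C(T,i) ≤ T^i / i!` and
`∑ c^i / i! ≤ e^c`.
-/

open Finset Real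

lemma Finset.exists_subset_range_fin {α : Type*} [Inhabited α] (s : Finset α) {N : ℕ}
    (h : s.card ≤ N) : ∃ c : Fin N → α, ↑s ⊆ Set.range c := by
  let e : s ↪ Fin N := s.equivFin.toEmbedding.trans (Fin.castLEEmb h)
  exact ⟨Function.extend e Subtype.val default,
    fun a ha => ⟨e ⟨a, ha⟩, e.injective.extend_apply _ _ _⟩⟩

/-- Trees are indexed by whole sign paths; those of the paper are the `IsPredictable` ones. -/
abbrev PathTree (Z : Type*) (n : ℕ) := Fin n → (Fin n → Bool) → Z

namespace PathTree

variable {Z : Type*} {n : ℕ}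

def IsPredictable (x : PathTree Z n) : Prop :=
  ∀ (t : Fin n) (ε ε' : Fin n → Bool), (∀ s < t, ε s = ε' s) → x t ε = x t ε'

def node (a : Z) (y : Bool → PathTree Z n) : PathTree Z (n + 1) :=
  fun t ε => Fin.cases (motive := fun _ => Z) a (fun s => y (ε 0) s (Fin.tail ε)) t

def child (x : PathTree Z (n + 1)) (b : Bool) : PathTree Z n :=
  fun t ε => x t.succ (Fin.cons b ε)

@[simp] lemma node_succ (a : Z) (y : Bool → PathTree Z n) (t : Fin n) (ε : Fin (n + 1) → Bool) :
    node a y t.succ ε = y (ε 0) t (Fin.tail ε) := rfl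

lemma child_tail (x : PathTree Z (n + 1)) (t : Fin n) (ε : Fin (n + 1) → Bool) :
    child x (ε 0) t (Fin.tail ε) = x t.succ ε := by
  simp only [child, Fin.cons_self_tail]

namespace IsPredictable

lemma root_eq {x : PathTree Z (n + 1)} (hx : IsPredictable x) (ε ε' : Fin (n + 1) → Bool) :
    x 0 ε = x 0 ε' :=
  hx 0 ε ε' fun s hs => absurd hs (Fin.not_lt_zero s)

lemma child {x : PathTree Z (n + 1)} (hx : IsPredictable x) (b : Bool) :
    IsPredictable (x.child b) := by
  intro t ε ε' h
  refine hx t.succ _ _ fun s hs => ?_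
  cases s using Fin.cases with
  | zero => rfl
  | succ s => exact h s (Fin.succ_lt_succ_iff.mp hs)

lemma node {y : Bool → PathTree Z n} (hy : ∀ b, IsPredictable (y b)) (a : Z) :
    IsPredictable (node a y) := by
  intro t ε ε' h
  cases t using Fin.cases with
  | zero => rfl
  | succ t =>
    simp only [node_succ, h 0 (Fin.succ_pos t)]
    exact hy _ t _ _ fun s hs => h s.succ (Fin.succ_lt_succ_iff.mpr hs)

end IsPredictable

/-- Shattering at scale `α = 2`, i.e. with margin `α / 2 = 1` around the witness tree `w`. -/
def Shatters (G : Set (Z → ℝ)) (y : PathTree Z n) : Prop :=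
  ∃ w : PathTree ℝ n, ∀ ε, ∃ g ∈ G, ∀ t,
    (if ε t then (1 : ℝ) else -1) * (g (y t ε) - w t ε) ≥ 1

lemma Shatters.mono {G G' : Set (Z → ℝ)} (hGG' : G ⊆ G') {y : PathTree Z n}
    (h : Shatters G y) : Shatters G' y := by
  obtain ⟨w, hw⟩ := h
  refine ⟨w, fun ε => ?_⟩
  obtain ⟨g, hg, hgw⟩ := hw ε
  exact ⟨g, hGG' hg, hgw⟩

lemma Shatters.nonempty {G : Set (Z → ℝ)} {y : PathTree Z n} (h : Shatters G y) :
    G.Nonempty := by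
  obtain ⟨w, hw⟩ := h
  obtain ⟨g, hg, -⟩ := hw fun _ => false
  exact ⟨g, hg⟩

lemma Shatters.node {G : Set (Z → ℝ)} {z : Z} {c : ℝ} {y : Bool → PathTree Z n}
    (h : ∀ b, Shatters {g ∈ G | (if b then (1 : ℝ) else -1) * (g z - c) ≥ 1} (y b)) :
    Shatters G (node z y) := by
  choose w hw using h
  refine ⟨PathTree.node c w, fun ε => ?_⟩
  obtain ⟨g, ⟨hg, hgz⟩, hgw⟩ := hw (ε 0) (Fin.tail ε)
  refine ⟨g, hg, fun t => ?_⟩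
  cases t using Fin.cases with
  | zero => exact hgz
  | succ t => exact hgw t

/-- `fat₂(G) < m`. -/
def FatDimLT (G : Set (Z → ℝ)) (m : ℕ) : Prop :=
  ∀ n, m ≤ n → ∀ y : PathTree Z n, IsPredictable y → ¬ Shatters G y

lemma FatDimLT.mono {G G' : Set (Z → ℝ)} (hG'G : G' ⊆ G) {m : ℕ} (h : FatDimLT G m) :
    FatDimLT G' m :=
  fun n hn y hy hs => h n hn y hy (hs.mono hG'G)

lemma FatDimLT.eq_empty_of_zero {G : Set (Z → ℝ)} (h : FatDimLT G 0) : G = ∅ := by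
  refine Set.eq_empty_of_forall_notMem fun g hg => h 0 le_rfl (fun t => t.elim0)
    (fun t => t.elim0) ⟨fun t => t.elim0, fun _ => ⟨g, hg, fun t => t.elim0⟩⟩

def HasCover (G : Set (Z → ℝ)) (x : PathTree Z n) (N : ℕ) : Prop :=
  ∃ V : Finset (PathTree ℝ n),
    (∀ g ∈ G, ∀ ε, ∃ v ∈ V, ∀ t, |v t ε - g (x t ε)| ≤ 1 / 2) ∧ V.card ≤ N

namespace HasCover

variable {G G' : Set (Z → ℝ)} {x : PathTree Z n} {N M : ℕ}

lemma mono (hG'G : G' ⊆ G) (hNM : N ≤ M) (h : HasCover G x N) : HasCover G' x M := by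
  obtain ⟨V, hV, hcard⟩ := h
  exact ⟨V, fun g hg => hV g (hG'G hg), hcard.trans hNM⟩

lemma of_eq_empty (hG : G = ∅) : HasCover G x 0 :=
  ⟨∅, by simp [hG], le_rfl⟩

lemma of_depth_zero (G : Set (Z → ℝ)) (x : PathTree Z 0) : HasCover G x 1 :=
  ⟨{fun t => t.elim0}, fun _ _ _ => ⟨_, mem_singleton_self _, fun t => t.elim0⟩, le_rfl⟩

lemma union (h : HasCover G x N) (h' : HasCover G' x M) : HasCover (G ∪ G') x (N + M) := by
  classical
  obtain ⟨V, hV, hcard⟩ := h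
  obtain ⟨V', hV', hcard'⟩ := h'
  refine ⟨V ∪ V', ?_, (card_union_le V V').trans (add_le_add hcard hcard')⟩
  rintro g (hg | hg) ε
  · obtain ⟨v, hv, hgv⟩ := hV g hg ε
    exact ⟨v, mem_union_left _ hv, hgv⟩
  · obtain ⟨v, hv, hgv⟩ := hV' g hg ε
    exact ⟨v, mem_union_right _ hv, hgv⟩

lemma biUnion {ι : Type*} (s : Finset ι) {G : ι → Set (Z → ℝ)} (h : ∀ j ∈ s, HasCover (G j) x N) :
    HasCover (⋃ j ∈ s, G j) x (s.card * N) := by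
  classical
  choose! V hV hcard using h
  refine ⟨s.biUnion V, ?_, card_biUnion_le_card_mul s V N hcard⟩
  intro g hg ε
  obtain ⟨j, hj, hgj⟩ := Set.mem_iUnion₂.mp hg
  obtain ⟨v, hv, hgv⟩ := hV j hj g hgj ε
  exact ⟨v, mem_biUnion.mpr ⟨j, hj, hv⟩, hgv⟩

/-- Covers of the two subtrees are zipped into a cover of the whole tree, so that the size
does not grow. -/
lemma node {x : PathTree Z (n + 1)} (h : ∀ b, HasCover G (x.child b) N) {r : ℝ}
    (hr : ∀ g ∈ G, ∀ ε, |r - g (x 0 ε)| ≤ 1 / 2) : HasCover G x N := by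
  classical
  choose V hV hcard using h
  choose c hc using fun b => (V b).exists_subset_range_fin (hcard b)
  refine ⟨univ.image fun i => PathTree.node r (c · i), ?_,
    card_image_le.trans (card_fin N).le⟩
  intro g hg ε
  obtain ⟨v, hv, hgv⟩ := hV (ε 0) g hg (Fin.tail ε)
  obtain ⟨i, rfl⟩ := hc _ hv
  refine ⟨_, mem_image_of_mem _ (mem_univ i), fun t => ?_⟩
  cases t using Fin.cases with
  | zero => exact hr g hg ε
  | succ t => simpa only [node_succ, child_tail] using hgv t

end HasCover

end PathTree

def sauerShelahSum (k m T : ℕ) : ℕ := ∑ i ∈ range m, T.choose i * k ^ i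

lemma sauerShelahSum_succ_zero (k m : ℕ) : sauerShelahSum k (m + 1) 0 = 1 := by
  simp [sauerShelahSum, sum_range_succ', Nat.choose_eq_zero_of_lt]

lemma sauerShelahSum_succ_succ (k m T : ℕ) :
    sauerShelahSum k (m + 1) (T + 1) = sauerShelahSum k (m + 1) T + k * sauerShelahSum k m T := by
  simp only [sauerShelahSum, sum_range_succ' _ m, Nat.choose_succ_succ, add_mul, sum_add_distrib,
    mul_sum, Nat.choose_zero_right]
  rw [sum_congr rfl fun i _ => (by ring : k * (T.choose i * k ^ i) = T.choose i * k ^ (i + 1))]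
  ring

lemma Nat.exists_forall_eq_or_eq_succ {S : Set ℕ} {k : ℕ} (hk : ∀ j ∈ S, j ≤ k)
    (h : ∀ i ∈ S, ∀ j ∈ S, j ≤ i + 1) : ∃ a ≤ k, ∀ j ∈ S, j = a ∨ j = a + 1 := by
  refine ⟨sInf S, ?_, fun j hj => ?_⟩
  · rcases S.eq_empty_or_nonempty with rfl | hS
    · simp
    · exact hk _ (Nat.sInf_mem hS)
  · have := Nat.sInf_le hj
    have := h _ (Nat.sInf_mem ⟨j, hj⟩) j hj
    omega

lemma Finset.card_range_succ_sdiff_pair_le {a k : ℕ} (hak : a ≤ k) :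
    ((range (k + 1)) \ {a, a + 1}).card ≤ k :=
  calc ((range (k + 1)) \ {a, a + 1}).card ≤ ((range (k + 1)).erase a).card :=
        card_le_card fun j hj => by simp_all
    _ = k := by simp [card_erase_of_mem (mem_range.mpr (Nat.lt_succ_of_le hak))]

namespace PathTree

variable {Z : Type*} {G : Set (Z → ℝ)} {k m : ℕ}

lemma le_succ_of_shatters_levels (hG : FatDimLT G (m + 1)) {z : Z} {i j : ℕ}
    {y y' : PathTree Z m} (hy : IsPredictable y) (hy' : IsPredictable y')
    (hi : Shatters {g ∈ G | g z = i} y) (hj : Shatters {g ∈ G | g z = j} y') : j ≤ i + 1 := by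
  by_contra hij
  have hij : (i : ℝ) + 2 ≤ j := by exact_mod_cast (by omega : i + 2 ≤ j)
  refine hG (m + 1) le_rfl (node z fun b => if b then y' else y)
    (IsPredictable.node (fun b => by cases b <;> assumption) z) (Shatters.node (c := i + 1) ?_)
  rintro (_ | _)
  · refine Shatters.mono (fun g hg => Set.mem_sep hg.1 ?_) hi
    norm_num [hg.2]
  · refine Shatters.mono (fun g hg => Set.mem_sep hg.1 ?_) hj
    simp only [if_true, hg.2]
    linarith

lemma hasCover_succ_succ (hval : ∀ g ∈ G, ∀ z, ∃ j ≤ k, g z = j) (hG : FatDimLT G (m + 1))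
    {T : ℕ} {x : PathTree Z (T + 1)} (hx : IsPredictable x)
    (ih : ∀ m', ∀ C ⊆ G, FatDimLT C m' → ∀ b, HasCover C (x.child b) (sauerShelahSum k m' T)) :
    HasCover G x (sauerShelahSum k (m + 1) (T + 1)) := by
  set z := x 0 fun _ => false
  have cover_of_close : ∀ C ⊆ G, ∀ m', FatDimLT C m' → ∀ r : ℝ, (∀ g ∈ C, |r - g z| ≤ 1 / 2) →
      HasCover C x (sauerShelahSum k m' T) := fun C hC m' hC' r hr =>
    HasCover.node (ih m' C hC hC') fun g hg ε => by rw [hx.root_eq ε]; exact hr g hg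
  -- the level sets that still shatter a tree of depth `m` sit at two adjacent values `a, a + 1`
  obtain ⟨a, hak, ha⟩ := Nat.exists_forall_eq_or_eq_succ
    (S := {j | ∃ y : PathTree Z m, IsPredictable y ∧ Shatters {g ∈ G | g z = j} y}) (k := k)
    (fun j ⟨_, _, hs⟩ => by
      obtain ⟨g, hg, hgz⟩ := hs.nonempty
      obtain ⟨j', hj'k, hj'⟩ := hval g hg z
      have : j = j' := by exact_mod_cast hgz.symm.trans hj'
      omega)
    (fun i ⟨_, hy, hi⟩ j ⟨_, hy', hj⟩ => le_succ_of_shatters_levels hG hy hy' hi hj)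
  set R := (range (k + 1)) \ {a, a + 1}
  have hmerged : HasCover {g ∈ G | g z = a ∨ g z = a + 1} x (sauerShelahSum k (m + 1) T) :=
    cover_of_close _ (Set.sep_subset _ _) _ (hG.mono (Set.sep_subset _ _)) (a + 1 / 2)
      (by rintro g ⟨-, h | h⟩ <;> norm_num [h, abs_le])
  have hlevels : ∀ j ∈ R, HasCover {g ∈ G | g z = j} x (sauerShelahSum k m T) := by
    intro j hj
    refine cover_of_close _ (Set.sep_subset _ _) _ (fun n hn y hy hs => ?_) j (by simp_all)
    rcases hn.eq_or_lt with rfl | hlt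
    · have := ha j ⟨y, hy, hs⟩
      simp_all [R]
    · exact hG n hlt y hy (hs.mono (Set.sep_subset _ _))
  refine (hmerged.union (HasCover.biUnion R hlevels)).mono (fun g hg => ?_) ?_
  · obtain ⟨j, hjk, hj⟩ := hval g hg z
    by_cases hja : j = a ∨ j = a + 1
    · left
      exact ⟨hg, by rcases hja with rfl | rfl <;> simp [hj]⟩
    · right
      exact Set.mem_biUnion (x := j) (by simp_all [R]) ⟨hg, hj⟩
  · rw [sauerShelahSum_succ_succ]
    gcongr
    exact card_range_succ_sdiff_pair_le hak

theorem hasCover_of_fatDimLT (hval : ∀ g ∈ G, ∀ z, ∃ j ≤ k, g z = j) (hG : FatDimLT G m)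
    {T : ℕ} {x : PathTree Z T} (hx : IsPredictable x) : HasCover G x (sauerShelahSum k m T) := by
  induction T generalizing m G with
  | zero =>
    rcases m with _ | m
    · exact HasCover.of_eq_empty hG.eq_empty_of_zero
    · exact (HasCover.of_depth_zero G x).mono le_rfl (sauerShelahSum_succ_zero k m).ge
  | succ T ih =>
    rcases m with _ | m
    · exact HasCover.of_eq_empty hG.eq_empty_of_zero
    · exact hasCover_succ_succ hval hG hx fun m' C hC hC' b =>
        ih (fun g hg => hval g (hC hg)) hC' (hx.child b)

end PathTree

lemma sum_choose_mul_pow_le_sum_pow_div_factorial {q : ℝ} (hq : 0 ≤ q) (T n : ℕ) :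
    ∑ i ∈ range n, (T.choose i : ℝ) * q ^ i ≤ ∑ i ∈ range n, (q * T) ^ i / i.factorial := by
  gcongr with i
  calc (T.choose i : ℝ) * q ^ i ≤ (T : ℝ) ^ i / i.factorial * q ^ i := by
        gcongr
        exact Nat.choose_le_pow_div i T
    _ = (q * T) ^ i / i.factorial := by ring

lemma sum_mul_pow_div_factorial_le {y c : ℝ} (hy : 1 ≤ y) (hc : 0 ≤ c) (d : ℕ) :
    ∑ i ∈ range (d + 1), (y * c) ^ i / i.factorial ≤ y ^ d * exp c :=
  calc ∑ i ∈ range (d + 1), (y * c) ^ i / i.factorial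
      ≤ ∑ i ∈ range (d + 1), y ^ d * (c ^ i / i.factorial) := by
        gcongr with i hi
        rw [mul_pow, mul_div_assoc]
        exact mul_le_mul_of_nonneg_right
          (pow_le_pow_right₀ hy (Nat.lt_succ_iff.mp (mem_range.mp hi))) (by positivity)
    _ ≤ y ^ d * exp c := by
        rw [← mul_sum]
        gcongr
        exact sum_le_exp_of_nonneg hc _

lemma sum_choose_mul_pow_le_exp_mul_pow {q : ℝ} {T : ℕ} (hqT : 1 ≤ q * T) (d : ℕ) :
    ∑ i ∈ range (d + 1), (T.choose i : ℝ) * q ^ i ≤ (exp 1 * q * T) ^ d := by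
  have hq : 0 ≤ q := by
    by_contra! hq
    nlinarith [(Nat.cast_nonneg T : (0 : ℝ) ≤ T)]
  rcases d with _ | d
  · simp
  calc ∑ i ∈ range (d + 2), (T.choose i : ℝ) * q ^ i
      ≤ ∑ i ∈ range (d + 2), (q * T * 1) ^ i / i.factorial := by
        simpa using sum_choose_mul_pow_le_sum_pow_div_factorial hq T (d + 2)
    _ ≤ (q * T) ^ (d + 1) * exp 1 := sum_mul_pow_div_factorial_le hqT zero_le_one _
    _ ≤ (q * T) ^ (d + 1) * exp 1 ^ (d + 1) := by
        gcongr
        exact le_self_pow₀ (one_le_exp zero_le_one) (Nat.succ_ne_zero d)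
    _ = (exp 1 * q * T) ^ (d + 1) := by ring

lemma sum_choose_mul_pow_le_exp_mul_div_pow {q : ℝ} {d T : ℕ} (hq : 1 ≤ q) (hdT : d ≤ T) :
    ∑ i ∈ range (d + 1), (T.choose i : ℝ) * q ^ i ≤ (exp 1 * q * T / d) ^ d := by
  rcases Nat.eq_zero_or_pos d with rfl | hd
  · simp
  have hd' : (0 : ℝ) < d := by exact_mod_cast hd
  have hy : 1 ≤ q * T / d := by
    rw [le_div_iff₀ hd', one_mul]
    exact (Nat.cast_le.mpr hdT).trans (le_mul_of_one_le_left (Nat.cast_nonneg _) hq)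
  calc ∑ i ∈ range (d + 1), (T.choose i : ℝ) * q ^ i
      ≤ ∑ i ∈ range (d + 1), (q * T / d * d) ^ i / i.factorial := by
        rw [div_mul_cancel₀ _ hd'.ne']
        exact sum_choose_mul_pow_le_sum_pow_div_factorial (by linarith) T _
    _ ≤ (q * T / d) ^ d * exp d := sum_mul_pow_div_factorial_le hy hd'.le d
    _ = (exp 1 * q * T / d) ^ d := by rw [← exp_one_pow]; ring

theorem stmt_16_general {Φι F X : Type*} (k d T : ℕ) (hk : 1 ≤ k) (hT : 1 ≤ T)
    (L : Φι → F → X → ℝ)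
    (hrange : ∀ φ f x, ∃ m : ℕ, m ≤ k ∧ L φ f x = m)
    (hfat_le : ∀ d' : ℕ, d < d' →
      ∀ (f : Fin d' → (Fin d' → Bool) → F) (x : Fin d' → (Fin d' → Bool) → X),
        (∀ (t : Fin d') (ε ε' : Fin d' → Bool),
          (∀ s : Fin d', s < t → ε s = ε' s) → f t ε = f t ε') →
        (∀ (t : Fin d') (ε ε' : Fin d' → Bool),
          (∀ s : Fin d', s < t → ε s = ε' s) → x t ε = x t ε') →
        ¬ ∃ w : Fin d' → (Fin d' → Bool) → ℝ, ∀ ε : Fin d' → Bool, ∃ φ : Φι,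
            ∀ t : Fin d',
              (if ε t then (1:ℝ) else -1) * (L φ (f t ε) (x t ε) - w t ε) ≥ 1) :
    (∀ (f : Fin T → (Fin T → Bool) → F) (x : Fin T → (Fin T → Bool) → X),
        (∀ (t : Fin T) (ε ε' : Fin T → Bool),
          (∀ s : Fin T, s < t → ε s = ε' s) → f t ε = f t ε') →
        (∀ (t : Fin T) (ε ε' : Fin T → Bool),
          (∀ s : Fin T, s < t → ε s = ε' s) → x t ε = x t ε') →
        ∃ V : Finset (Fin T → (Fin T → Bool) → ℝ),
          (∀ (φ : Φι) (ε : Fin T → Bool), ∃ v ∈ V,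
            ∀ t : Fin T, |v t ε - L φ (f t ε) (x t ε)| ≤ 1 / 2) ∧
          V.card ≤ ∑ i ∈ Finset.range (d + 1), T.choose i * k ^ i)
    ∧ ((∑ i ∈ Finset.range (d + 1), (T.choose i : ℝ) * (k : ℝ) ^ i)
        ≤ (Real.exp 1 * k * T) ^ d)
    ∧ (d ≤ T → (∑ i ∈ Finset.range (d + 1), (T.choose i : ℝ) * (k : ℝ) ^ i)
        ≤ (Real.exp 1 * k * T / d) ^ d) := by
  have hk' : (1 : ℝ) ≤ k := by exact_mod_cast hk
  have hT' : (1 : ℝ) ≤ T := by exact_mod_cast hT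
  refine ⟨fun f x hf hx => ?_,
    sum_choose_mul_pow_le_exp_mul_pow (one_le_mul_of_one_le_of_one_le hk' hT') d,
    fun hdT => sum_choose_mul_pow_le_exp_mul_div_pow hk' hdT⟩
  let G : Set (F × X → ℝ) := Set.range fun φ p => L φ p.1 p.2
  have hG : PathTree.FatDimLT G (d + 1) := by
    rintro n hn y hy ⟨w, hw⟩
    refine hfat_le n hn (fun t ε => (y t ε).1) (fun t ε => (y t ε).2)
      (fun t ε ε' h => congrArg Prod.fst (hy t ε ε' h))
      (fun t ε ε' h => congrArg Prod.snd (hy t ε ε' h)) ⟨w, fun ε => ?_⟩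
    obtain ⟨_, ⟨φ, rfl⟩, hφ⟩ := hw ε
    exact ⟨φ, hφ⟩
  obtain ⟨V, hV, hcard⟩ := PathTree.hasCover_of_fatDimLT (k := k)
    (by rintro _ ⟨φ, rfl⟩ p; exact hrange φ p.1 p.2) hG
    (x := fun t ε => (f t ε, x t ε)) fun t ε ε' h => Prod.ext (hf t ε ε' h) (hx t ε ε' h)
  exact ⟨V, fun φ ε => hV _ ⟨φ, rfl⟩ ε, hcard⟩

/-- Sauer–Shelah-type bound for trees (Theorem 8): if the payoff class `L` takes
values in `{0,…,k}` and its fat-shattering dimension at scale `2` equals `d`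
(no `(F×X)`-valued tree of depth `> d` is `2`-shattered, and some tree of depth
`d` is `2`-shattered), then every `(F×X)`-valued tree of depth `T` admits an
`ℓ_∞`-cover at scale `1/2` of size at most `∑_{i=0}^d C(T,i) k^i ≤ (ekT)^d`,
and for `T ≥ d` moreover `∑_{i=0}^d C(T,i) k^i ≤ (ekT/d)^d`. -/
theorem stmt_16 {Φι F X : Type*} (k d T : ℕ) (hk : 1 ≤ k) (hT : 1 ≤ T)
    (L : Φι → F → X → ℝ)
    (hrange : ∀ φ f x, ∃ m : ℕ, m ≤ k ∧ L φ f x = m)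
    (hfat_le : ∀ d' : ℕ, d < d' →
      ∀ (f : Fin d' → (Fin d' → Bool) → F) (x : Fin d' → (Fin d' → Bool) → X),
        (∀ (t : Fin d') (ε ε' : Fin d' → Bool),
          (∀ s : Fin d', s < t → ε s = ε' s) → f t ε = f t ε') →
        (∀ (t : Fin d') (ε ε' : Fin d' → Bool),
          (∀ s : Fin d', s < t → ε s = ε' s) → x t ε = x t ε') →
        ¬ ∃ w : Fin d' → (Fin d' → Bool) → ℝ, ∀ ε : Fin d' → Bool, ∃ φ : Φι,
            ∀ t : Fin d',
              (if ε t then (1:ℝ) else -1) * (L φ (f t ε) (x t ε) - w t ε) ≥ 1)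
    (hfat_ge : ∃ (f : Fin d → (Fin d → Bool) → F) (x : Fin d → (Fin d → Bool) → X),
        (∀ (t : Fin d) (ε ε' : Fin d → Bool),
          (∀ s : Fin d, s < t → ε s = ε' s) → f t ε = f t ε') ∧
        (∀ (t : Fin d) (ε ε' : Fin d → Bool),
          (∀ s : Fin d, s < t → ε s = ε' s) → x t ε = x t ε') ∧
        ∃ w : Fin d → (Fin d → Bool) → ℝ, ∀ ε : Fin d → Bool, ∃ φ : Φι,
            ∀ t : Fin d,
              (if ε t then (1:ℝ) else -1) * (L φ (f t ε) (x t ε) - w t ε) ≥ 1) :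
    (∀ (f : Fin T → (Fin T → Bool) → F) (x : Fin T → (Fin T → Bool) → X),
        (∀ (t : Fin T) (ε ε' : Fin T → Bool),
          (∀ s : Fin T, s < t → ε s = ε' s) → f t ε = f t ε') →
        (∀ (t : Fin T) (ε ε' : Fin T → Bool),
          (∀ s : Fin T, s < t → ε s = ε' s) → x t ε = x t ε') →
        ∃ V : Finset (Fin T → (Fin T → Bool) → ℝ),
          (∀ (φ : Φι) (ε : Fin T → Bool), ∃ v ∈ V,
            ∀ t : Fin T, |v t ε - L φ (f t ε) (x t ε)| ≤ 1 / 2) ∧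
          V.card ≤ ∑ i ∈ Finset.range (d + 1), T.choose i * k ^ i)
    ∧ ((∑ i ∈ Finset.range (d + 1), (T.choose i : ℝ) * (k : ℝ) ^ i)
        ≤ (Real.exp 1 * k * T) ^ d)
    ∧ (d ≤ T → (∑ i ∈ Finset.range (d + 1), (T.choose i : ℝ) * (k : ℝ) ^ i)
        ≤ (Real.exp 1 * k * T / d) ^ d) :=
  stmt_16_general k d T hk hT L hrange hfat_le
end

section
/- Suppose a nonnegative function G on a Banach space is sub-additive (G(a+b) ≤ G(a) + G(b)), 1-Lipschitz with respect to the norm ‖·‖, and G(0) = 0. Let V be a finite α-cover in ℓ_1 of a family of sequences {(u^φ_t(ε))_{t≤T} : φ}, meaning for every φ and every sign path ε there exists v ∈ V with (1/T)Σ_{t=1}^T ‖v_t(ε) − u^φ_t(ε)‖ ≤ α. Then P_ε( sup_φ G((1/T)Σ_t ε_t u^φ_t(ε)) > 2α + θ ) ≤ |V| · sup_z P_ε( G((1/T)Σ_t ε_t z_t(ε)) > θ ), where the supremum on the right is over all trees z with values in the payoff space. -/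
/-! If the signed average of `u^φ` exceeds `2α + θ` under `G`, the cover element `v` chosen for
`(φ, ε)` has a signed average within `α` of it in norm, so, `G` being `1`-Lipschitz, `G` of the
latter exceeds `α + θ ≥ θ`. Hence the event on the left lies in a union of `|V|` events, each
of which is the event on the right for the tree `z = v`, and the union bound concludes. -/

open Finset

lemma norm_smul_sum_sign_smul_sub_le {ι H : Type*} [Fintype ι] [NormedAddCommGroup H]
    [NormedSpace ℝ H] {c : ℝ} (hc : 0 ≤ c) (ε : ι → Bool) (x y : ι → H) :
    ‖c • ∑ i, (if ε i then (1:ℝ) else -1) • x i - c • ∑ i, (if ε i then (1:ℝ) else -1) • y i‖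
      ≤ c * ∑ i, ‖x i - y i‖ := by
  rw [← smul_sub, ← sum_sub_distrib, norm_smul, Real.norm_eq_abs, abs_of_nonneg hc]
  gcongr
  refine (norm_sum_le _ _).trans (le_of_eq (sum_congr rfl fun i _ => ?_))
  rw [← smul_sub, norm_smul]
  cases ε i <;> simp

lemma ncard_div_le_card_mul_iSup {Ω ι Z : Type*} [Finite Ω] {A : Set Ω} (V : Finset ι)
    (B : ι → Set Ω) (hA : A ⊆ ⋃ v ∈ V, B v) (F : Z → Set Ω) (hB : ∀ v ∈ V, ∃ z, F z = B v)
    {c : ℝ} (hc : 0 ≤ c) :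
    (A.ncard : ℝ) / c ≤ V.card * ⨆ z, ((F z).ncard : ℝ) / c := by
  have hbdd : BddAbove (Set.range fun z => ((F z).ncard : ℝ) / c) := by
    refine ⟨Nat.card Ω / c, ?_⟩
    rintro _ ⟨z, rfl⟩
    exact div_le_div_of_nonneg_right (by exact_mod_cast Set.ncard_le_card _) hc
  calc (A.ncard : ℝ) / c ≤ ((∑ v ∈ V, (B v).ncard : ℕ) : ℝ) / c := by
        gcongr
        exact (Set.ncard_le_ncard hA).trans (V.set_ncard_biUnion_le B)
    _ = ∑ v ∈ V, ((B v).ncard : ℝ) / c := by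
        push_cast
        exact sum_div _ _ _
    _ ≤ ∑ _v ∈ V, ⨆ z, ((F z).ncard : ℝ) / c := by
        refine sum_le_sum fun v hv => ?_
        obtain ⟨z, hz⟩ := hB v hv
        exact hz ▸ le_ciSup hbdd z
    _ = V.card * ⨆ z, ((F z).ncard : ℝ) / c := by
        rw [sum_const, nsmul_eq_mul]

theorem stmt_18_general {H : Type*} [NormedAddCommGroup H] [NormedSpace ℝ H]
    {Φι : Type*} (T : ℕ) (α θ : ℝ)
    (G : H → ℝ)
    (hGlip : ∀ a b, |G a - G b| ≤ ‖a - b‖)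
    (u : Φι → Fin T → (Fin T → Bool) → H)
    (V : Finset (Fin T → (Fin T → Bool) → H))
    (hVtree : ∀ v ∈ V, ∀ (t : Fin T) (ε ε' : Fin T → Bool),
      (∀ s : Fin T, s < t → ε s = ε' s) → v t ε = v t ε')
    (hcover : ∀ (φ : Φι) (ε : Fin T → Bool), ∃ v ∈ V,
      (T : ℝ)⁻¹ * ∑ t, ‖v t ε - u φ t ε‖ ≤ α) :
    ((({ε : Fin T → Bool | ∃ φ : Φι, 2 * α + θ
          < G ((T : ℝ)⁻¹ • ∑ t, (if ε t then (1:ℝ) else -1) • u φ t ε)} : Set _).ncard : ℝ)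
        / 2 ^ T)
      ≤ V.card * ⨆ z : {z : Fin T → (Fin T → Bool) → H //
            ∀ (t : Fin T) (ε ε' : Fin T → Bool),
              (∀ s : Fin T, s < t → ε s = ε' s) → z t ε = z t ε'},
          ((({ε : Fin T → Bool | θ
              < G ((T : ℝ)⁻¹ • ∑ t, (if ε t then (1:ℝ) else -1) • z.1 t ε)} : Set _).ncard : ℝ)
            / 2 ^ T) := by
  refine ncard_div_le_card_mul_iSup V
    (fun v => {ε | θ < G ((T : ℝ)⁻¹ • ∑ t, (if ε t then (1:ℝ) else -1) • v t ε)}) ?_ _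
    (fun v hv => ⟨⟨v, hVtree v hv⟩, rfl⟩) (by positivity)
  rintro ε ⟨φ, hφ⟩
  obtain ⟨v, hvV, hvu⟩ := hcover φ ε
  have hdist := (norm_smul_sum_sign_smul_sub_le (by positivity : (0:ℝ) ≤ (T : ℝ)⁻¹) ε
    (v · ε) (u φ · ε)).trans hvu
  have hα : 0 ≤ α := (norm_nonneg _).trans hdist
  have hG := (le_abs_self _).trans ((hGlip _ _).trans ((norm_sub_rev _ _).le.trans hdist))
  exact Set.mem_biUnion hvV (show θ < _ by linarith)

/-- Union bound via an `ℓ₁` cover (Lemma 18): if `G ≥ 0` is sub-additive,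
`1`-Lipschitz with `G(0)=0`, and `V` is an `α`-cover in `ℓ₁` of the family of
trees `u^φ`, then
`P_ε(sup_φ G((1/T)∑ₜ εₜ u^φₜ(ε)) > 2α + θ) ≤ |V| · sup_z P_ε(G((1/T)∑ₜ εₜ zₜ(ε)) > θ)`,
the supremum on the right over all `H`-valued trees `z` of depth `T`. -/
theorem stmt_18 {H : Type*} [NormedAddCommGroup H] [NormedSpace ℝ H]
    {Φι : Type*} [Nonempty Φι] (T : ℕ) (α θ : ℝ)
    (G : H → ℝ) (hGnn : ∀ x, 0 ≤ G x) (hGsub : ∀ a b, G (a + b) ≤ G a + G b)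
    (hGlip : ∀ a b, |G a - G b| ≤ ‖a - b‖) (hG0 : G 0 = 0)
    (u : Φι → Fin T → (Fin T → Bool) → H)
    (hutree : ∀ (φ : Φι) (t : Fin T) (ε ε' : Fin T → Bool),
      (∀ s : Fin T, s < t → ε s = ε' s) → u φ t ε = u φ t ε')
    (V : Finset (Fin T → (Fin T → Bool) → H))
    (hVtree : ∀ v ∈ V, ∀ (t : Fin T) (ε ε' : Fin T → Bool),
      (∀ s : Fin T, s < t → ε s = ε' s) → v t ε = v t ε')
    (hcover : ∀ (φ : Φι) (ε : Fin T → Bool), ∃ v ∈ V,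
      (T : ℝ)⁻¹ * ∑ t, ‖v t ε - u φ t ε‖ ≤ α) :
    ((({ε : Fin T → Bool | ∃ φ : Φι, 2 * α + θ
          < G ((T : ℝ)⁻¹ • ∑ t, (if ε t then (1:ℝ) else -1) • u φ t ε)} : Set _).ncard : ℝ)
        / 2 ^ T)
      ≤ V.card * ⨆ z : {z : Fin T → (Fin T → Bool) → H //
            ∀ (t : Fin T) (ε ε' : Fin T → Bool),
              (∀ s : Fin T, s < t → ε s = ε' s) → z t ε = z t ε'},
          ((({ε : Fin T → Bool | θ
              < G ((T : ℝ)⁻¹ • ∑ t, (if ε t then (1:ℝ) else -1) • z.1 t ε)} : Set _).ncard : ℝ)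
            / 2 ^ T) :=
  stmt_18_general T α θ G hGlip u V hVtree hcover
end
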